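/- For every x ∈ (-a,a), the limit lim_{n→∞} D^n(x) / ∏_{j=0}^{n-1} D'(D^j(x)) exists and equals g(x) := h(x)/h'(x). -/

import Mathlib

/-!
Differentiating Schröder's equation `h ∘ D = λ h` gives `h'(D x) D'(x) = λ h'(x)`, so the product
`∏_{j<n} D'(Dʲ x)` telescopes to `λⁿ h'(x) / h'(Dⁿ x)`, while `h(Dⁿ x) = λⁿ h(x)`. Hence
`Dⁿ x / ∏_{j<n} D'(Dʲ x) = (Dⁿ x / h(Dⁿ x)) · h'(Dⁿ x) · (h x / h' x)`. Since `h` is strictly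
increasing and `h(Dⁿ x) → 0`, the orbit `Dⁿ x` tends to `0`, where `y / h y → 1 / h'(0) = 1` and
`h'(y) → h'(0) = 1`.
-/

open Filter Topology Set

section Order

variable {α β ι : Type*} [LinearOrder α] [TopologicalSpace α] [OrderTopology α] [DenselyOrdered α]
  [LinearOrder β] [TopologicalSpace β] [OrderTopology β]
  {f : α → β} {s : Set α} {c : α} {u : ι → α} {l : Filter ι}

theorem StrictMonoOn.eventually_gt_of_tendsto_comp (hf : StrictMonoOn f s) (hs : s ∈ 𝓝 c)
    (hu : ∀ᶠ n in l, u n ∈ s) (hfu : Tendsto (f ∘ u) l (𝓝 (f c))) {b : α} (hb : b < c) :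
    ∀ᶠ n in l, b < u n := by
  obtain ⟨b', hb', hsub⟩ := exists_Ioc_subset_of_mem_nhds' hs hb
  obtain ⟨b'', hb'b'', hb''c⟩ := exists_between hb'.2
  have hb''s : b'' ∈ s := hsub ⟨hb'b'', hb''c.le⟩
  filter_upwards [hu, (tendsto_order.1 hfu).1 _ (hf hb''s (mem_of_mem_nhds hs) hb''c)]
    with n hun hfun
  exact hb'.1.trans_lt (hb'b''.trans ((hf.lt_iff_lt hb''s hun).1 hfun))

theorem StrictMonoOn.tendsto_of_tendsto_comp (hf : StrictMonoOn f s) (hs : s ∈ 𝓝 c)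
    (hu : ∀ᶠ n in l, u n ∈ s) (hfu : Tendsto (f ∘ u) l (𝓝 (f c))) : Tendsto u l (𝓝 c) :=
  tendsto_order.2 ⟨fun _ hb => hf.eventually_gt_of_tendsto_comp hs hu hfu hb,
    fun _ hb => hf.dual.eventually_gt_of_tendsto_comp (c := OrderDual.toDual c) hs hu hfu hb⟩

end Order

theorem Set.MapsTo.iterate_mul_prod_eq_pow_mul {α M : Type*} [CommMonoid M] {D : α → α}
    {s : Set α} (hD : MapsTo D s s) {φ ψ : α → M} {c : M}
    (hcocycle : ∀ x ∈ s, φ (D x) * ψ x = c * φ x) {x : α} (hx : x ∈ s) (n : ℕ) :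
    φ (D^[n] x) * ∏ j ∈ Finset.range n, ψ (D^[j] x) = c ^ n * φ x := by
  induction n with
  | zero => simp
  | succ n ih =>
    calc φ (D^[n + 1] x) * ∏ j ∈ Finset.range (n + 1), ψ (D^[j] x)
        = φ (D (D^[n] x)) * ψ (D^[n] x) * ∏ j ∈ Finset.range n, ψ (D^[j] x) := by
          rw [Finset.prod_range_succ, Function.iterate_succ_apply']; ac_rfl
      _ = c ^ (n + 1) * φ x := by
          rw [hcocycle _ (hD.iterate n hx), mul_assoc, ih, pow_succ', mul_assoc]

theorem Set.MapsTo.iterate_schroeder {α M : Type*} [CommMonoid M] {D : α → α} {s : Set α}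
    (hmaps : MapsTo D s s) {h : α → M} {c : M} (hSch : ∀ x ∈ s, h (D x) = c * h x) {x : α}
    (hx : x ∈ s) (n : ℕ) : h (D^[n] x) = c ^ n * h x := by
  simpa using hmaps.iterate_mul_prod_eq_pow_mul (ψ := fun _ => (1 : M)) (by simpa using hSch) hx n

theorem iterate_div_prod_eq_of_schroeder {K : Type*} [Field K] {D h h' D' : K → K} {s : Set K}
    {c : K} (hmaps : MapsTo D s s) (hSch : ∀ x ∈ s, h (D x) = c * h x)
    (hSch' : ∀ x ∈ s, h' (D x) * D' x = c * h' x) (hh' : ∀ x ∈ s, h' x ≠ 0) {x : K} (hx : x ∈ s)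
    (hhx : h x ≠ 0) (n : ℕ) :
    D^[n] x / ∏ j ∈ Finset.range n, D' (D^[j] x) =
      D^[n] x / h (D^[n] x) * h' (D^[n] x) * (h x / h' x) := by
  have hprod : ∏ j ∈ Finset.range n, D' (D^[j] x) = c ^ n * h' x / h' (D^[n] x) := by
    rw [← hmaps.iterate_mul_prod_eq_pow_mul hSch' hx n]
    field_simp [hh' _ (hmaps.iterate n hx)]
  rw [hprod, hmaps.iterate_schroeder hSch hx]
  field_simp [hh' x hx]

theorem tendsto_iterate_nhdsNE_zero_of_schroeder {D h : ℝ → ℝ} {s : Set ℝ} {lam : ℝ}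
    (hs : s ∈ 𝓝 0) (hmaps : MapsTo D s s) (hmono : StrictMonoOn h s) (hh0 : h 0 = 0)
    (hlam0 : 0 < lam) (hlam1 : lam < 1)
    (hSch : ∀ x ∈ s, h (D x) = lam * h x) {x : ℝ} (hx : x ∈ s) (hhx : h x ≠ 0) :
    Tendsto (D^[·] x) atTop (𝓝[≠] 0) := by
  have hne (n : ℕ) : D^[n] x ≠ 0 := fun hn => by
    simpa [hn, hh0, hhx, hlam0.ne'] using hmaps.iterate_schroeder hSch hx n
  refine tendsto_nhdsWithin_of_tendsto_nhds_of_eventually_within _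
    (hmono.tendsto_of_tendsto_comp hs (Eventually.of_forall (hmaps.iterate · hx)) ?_)
    (Eventually.of_forall hne)
  simpa [Function.comp_def, hmaps.iterate_schroeder hSch hx, hh0] using
    (tendsto_pow_atTop_nhds_zero_of_lt_one hlam0.le hlam1).mul_const (h x)

section Deriv

variable {𝕜 : Type*} [NontriviallyNormedField 𝕜] {D h : 𝕜 → 𝕜} {s : Set 𝕜} {c : 𝕜}

theorem deriv_comp_mul_deriv_eq_of_schroeder (hs : IsOpen s) (hmaps : MapsTo D s s)
    (hD : DifferentiableOn 𝕜 D s) (hh : DifferentiableOn 𝕜 h s)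
    (hSch : ∀ x ∈ s, h (D x) = c * h x) : ∀ x ∈ s, deriv h (D x) * deriv D x = c * deriv h x := by
  intro x hx
  rw [← deriv_comp x (hh.differentiableAt (hs.mem_nhds (hmaps hx)))
    (hD.differentiableAt (hs.mem_nhds hx)), ← deriv_const_mul_field]
  exact EventuallyEq.deriv_eq (eventually_of_mem (hs.mem_nhds hx) hSch)

theorem tendsto_div_mul_deriv_nhdsNE (hh0 : h 0 = 0) (hd : HasDerivAt h c 0) (hc : c ≠ 0)
    (hcont : ContinuousAt (deriv h) 0) :
    Tendsto (fun y => y / h y * deriv h y) (𝓝[≠] 0) (𝓝 1) := by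
  have hslope : Tendsto (fun y => h y / y) (𝓝[≠] 0) (𝓝 c) := by
    refine (hasDerivAt_iff_tendsto_slope.1 hd).congr fun y => ?_
    simp [slope_def_field, hh0]
  have hderiv : Tendsto (deriv h) (𝓝[≠] 0) (𝓝 c) := by
    simpa [hd.deriv] using hcont.tendsto.mono_left nhdsWithin_le_nhds
  simpa [inv_div, hc] using (hslope.inv₀ hc).mul hderiv

end Deriv

theorem mapsTo_Ioo_neg_of_abs_lt {D : ℝ → ℝ} {a : ℝ} (hD0 : D 0 = 0)
    (hcontract : ∀ x ∈ Ioo (-a) a, x ≠ 0 → |D x| < |x|) : MapsTo D (Ioo (-a) a) (Ioo (-a) a) := by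
  intro x hx
  rcases eq_or_ne x 0 with rfl | hx0
  · rwa [hD0]
  · exact abs_lt.1 ((hcontract x hx hx0).trans (abs_lt.2 hx))

theorem julia_solution_as_limit_general
    (a : ℝ) (ha : 0 < a) (D : ℝ → ℝ) (lam : ℝ)
    (hD : ContDiffOn ℝ 1 D (Set.Ioo (-a) a))
    (hD0 : D 0 = 0)
    (hlam0 : 0 < lam) (hlam1 : lam < 1)
    (hcontract : ∀ x ∈ Set.Ioo (-a) a, x ≠ 0 → |D x| < |x|)
    (h : ℝ → ℝ)
    (hh : ContDiffOn ℝ 1 h (Set.Ioo (-a) a))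
    (hh0 : h 0 = 0) (hh'0 : deriv h 0 = 1)
    (hh'pos : ∀ x ∈ Set.Ioo (-a) a, 0 < deriv h x)
    (hSch : ∀ x ∈ Set.Ioo (-a) a, h (D x) = lam * h x) :
    ∀ x ∈ Set.Ioo (-a) a,
      Filter.Tendsto
        (fun n : ℕ => D^[n] x / ∏ j ∈ Finset.range n, deriv D (D^[j] x))
        Filter.atTop (nhds (h x / deriv h x)) := by
  intro x hx
  have hI0 : Ioo (-a) a ∈ 𝓝 0 := Ioo_mem_nhds (neg_lt_zero.2 ha) ha
  have hmaps := mapsTo_Ioo_neg_of_abs_lt hD0 hcontract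
  have hmono : StrictMonoOn h (Ioo (-a) a) :=
    strictMonoOn_of_deriv_pos (convex_Ioo _ _) hh.continuousOn (by simpa using hh'pos)
  rcases eq_or_ne x 0 with rfl | hx0
  · simp [Function.iterate_fixed hD0, hh0]
  have hhx : h x ≠ 0 := fun hx' => hx0 (hmono.injOn hx (mem_of_mem_nhds hI0) (hx'.trans hh0.symm))
  have hhD := hh.differentiableOn one_ne_zero
  have hSch' := deriv_comp_mul_deriv_eq_of_schroeder isOpen_Ioo hmaps
    (hD.differentiableOn one_ne_zero) hhD hSch
  have hlim := (tendsto_div_mul_deriv_nhdsNE hh0 (hhD.differentiableAt hI0).hasDerivAt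
    (by rw [hh'0]; exact one_ne_zero)
    ((hh.continuousOn_deriv_of_isOpen isOpen_Ioo le_rfl).continuousAt hI0)).comp
    (tendsto_iterate_nhdsNE_zero_of_schroeder hI0 hmaps hmono hh0 hlam0 hlam1 hSch hx hhx)
  refine ((hlim.mul_const (h x / deriv h x)).congr fun n => ?_).trans (by rw [one_mul])
  exact (iterate_div_prod_eq_of_schroeder hmaps hSch hSch' (fun y hy => (hh'pos y hy).ne') hx
    hhx n).symm

/-- For every `x ∈ (-a,a)`, the limit
`lim_{n→∞} Dⁿ(x) / ∏_{j=0}^{n-1} D'(Dʲ(x))` exists and equals `g(x) := h(x)/h'(x)`. -/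
theorem julia_solution_as_limit
    (a ε : ℝ) (ha : 0 < a) (hε : 0 < ε) (D : ℝ → ℝ) (lam : ℝ)
    (hD : ContDiffOn ℝ 1 D (Set.Ioo (-a) a))
    (hHolder : ∃ k > 0, ∀ y ∈ Set.Ioo (-a) a, ∀ z ∈ Set.Ioo (-a) a,
      |deriv D z - deriv D y| ≤ k * |z - y| ^ ε)
    (hD0 : D 0 = 0)
    (hlam : deriv D 0 = lam) (hlam0 : 0 < lam) (hlam1 : lam < 1)
    (hcontract : ∀ x ∈ Set.Ioo (-a) a, x ≠ 0 → |D x| < |x|)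
    (h : ℝ → ℝ)
    (hh : ContDiffOn ℝ 1 h (Set.Ioo (-a) a))
    (hh0 : h 0 = 0) (hh'0 : deriv h 0 = 1)
    (hh'pos : ∀ x ∈ Set.Ioo (-a) a, 0 < deriv h x)
    (hSch : ∀ x ∈ Set.Ioo (-a) a, h (D x) = lam * h x) :
    ∀ x ∈ Set.Ioo (-a) a,
      Filter.Tendsto
        (fun n : ℕ => D^[n] x / ∏ j ∈ Finset.range n, deriv D (D^[j] x))
        Filter.atTop (nhds (h x / deriv h x)) :=
  julia_solution_as_limit_general a ha D lam hD hD0 hlam0 hlam1 hcontract h hh hh0 hh'0 hh'pos hSch
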